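/- If α ∈ P and β ∈ P, then no strict nonempty prefix of α is in P, i.e., the only prefix of α that belongs to P is α itself. (Prefix-freeness of Polish notation.) -/
import Mathlib


inductive AB | a | b
deriving DecidableEq

inductive P : List AB → Prop
  | base : P [AB.a]
  | step {α β : List AB} : P α → P β → P (AB.b :: (α ++ β))

lemma prefix_total {s t u : List AB} (h1 : s <+: u) (h2 : t <+: u) :
    s <+: t ∨ t <+: s := by
  induction u generalizing s t with
  | nil => simp_all
  | cons x xs ih =>
    rcases s with _ | ⟨y, ys⟩
    · left; simp
    rcases t with _ | ⟨z, zs⟩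
    · right; simp
    obtain ⟨p, hp⟩ := h1
    obtain ⟨q, hq⟩ := h2
    simp only [List.cons_append, List.cons.injEq] at hp hq
    rcases ih ⟨p, hp.2⟩ ⟨q, hq.2⟩ with h | h
    · left; rw [hp.1, hq.1]; simpa using h
    · right; rw [hp.1, hq.1]; simpa using h

lemma P_ne_nil {α : List AB} (h : P α) : α ≠ [] := by
  cases h <;> simp

lemma polish_aux : ∀ n (α β : List AB), α.length ≤ n → P α → P β → β <+: α → β = α := by
  intro n
  induction n with
  | zero =>
    intro α β hlen hα _ _
    cases hα <;> simp at hlen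
  | succ n ih =>
    intro α β hlen hα hβ hpre
    cases hα with
    | base =>
      cases hβ with
      | base => rfl
      | step h1 h2 =>
        obtain ⟨t, ht⟩ := hpre
        simp at ht
    | step h1 h2 =>
      rename_i α₁ α₂
      cases hβ with
      | base =>
        obtain ⟨t, ht⟩ := hpre
        simp at ht
      | step b1 b2 =>
        rename_i β₁ β₂
        obtain ⟨t, ht⟩ := hpre
        simp only [List.cons_append, List.cons.injEq] at ht
        have hpre' : β₁ ++ β₂ <+: α₁ ++ α₂ := ⟨t, ht.2⟩
        have h1' : β₁ <+: α₁ ++ α₂ := (List.prefix_append β₁ β₂).trans hpre'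
        have hlen' : (α₁ ++ α₂).length ≤ n := by
          simp only [List.length_cons] at hlen; omega
        have hβ₁ : β₁ = α₁ := by
          rcases prefix_total h1' (List.prefix_append α₁ α₂) with h | h
          · exact ih α₁ β₁ (by simp at hlen' ⊢; omega) h1 b1 h
          · refine (ih β₁ α₁ ?_ b1 h1 h).symm
            calc β₁.length ≤ (α₁ ++ α₂).length := h1'.length_le
              _ ≤ n := hlen'
        subst hβ₁
        have hpre₂ : β₂ <+: α₂ := by
          have := ht.2
          rw [List.append_assoc] at this
          exact ⟨t, List.append_cancel_left this⟩
        rw [ih α₂ β₂ (by simp at hlen' ⊢; omega) h2 b2 hpre₂]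

theorem polish_prefix_free (α β : List AB) (hα : P α) (hβ : P β)
    (hpre : β <+: α) : β = α :=
  polish_aux α.length α β le_rfl hα hβ hpre
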